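/- If I ⊆ R is a saturated strongly stable ideal that is not doubly saturated, then in any fixed degree d, among the monomials x^A of degree d−1 such that x^A·x_{n−1} is a minimal generator of I, the lexicographically largest one is contractible in I. -/

import Mathlib

open MvPolynomial
open scoped Fin.NatCast

noncomputable section

/-- The polynomial ring `K[x_0,…,x_n]` in `n+1` variables. -/
abbrev PR (K : Type*) [Field K] (n : ℕ) := MvPolynomial (Fin (n+1)) K

variable {K : Type*} [Field K] {n : ℕ}

/-- The monomial `x^A`. -/
def mon (A : Fin (n+1) →₀ ℕ) : PR K n := monomial A 1

/-- Total degree of the monomial with exponent vector `A`. -/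
def mdeg (A : Fin (n+1) →₀ ℕ) : ℕ := ∑ i, A i

/-- The largest index of a variable dividing `x^A` (0 if `A = 0`). -/
def maxIdx (A : Fin (n+1) →₀ ℕ) : Fin (n+1) := WithBot.unbotD 0 (A.support.max)

/-- The exponent vector of `(x_i / x_j) · x^A`. -/
def shiftM (A : Fin (n+1) →₀ ℕ) (i j : Fin (n+1)) : Fin (n+1) →₀ ℕ :=
  A + Finsupp.single i 1 - Finsupp.single j 1

/-- `I` is a monomial ideal: generated by a set of monomials. -/
def IsMonomialIdeal (I : Ideal (PR K n)) : Prop :=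
  ∃ S : Set (Fin (n+1) →₀ ℕ), I = Ideal.span ((fun A => (mon A : PR K n)) '' S)

/-- Strongly stable monomial ideal. -/
def StronglyStable (I : Ideal (PR K n)) : Prop :=
  ∀ A : Fin (n+1) →₀ ℕ, mon A ∈ I → ∀ i j : Fin (n+1), A j ≠ 0 → i < j →
    mon (shiftM A i j) ∈ I

/-- Stable monomial ideal. -/
def Stable (I : Ideal (PR K n)) : Prop :=
  ∀ A : Fin (n+1) →₀ ℕ, A ≠ 0 → mon A ∈ I → ∀ i : Fin (n+1), i < maxIdx A →
    mon (shiftM A i (maxIdx A)) ∈ I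

/-- `x^A` is a minimal monomial generator of `I`. -/
def MinGen (I : Ideal (PR K n)) (A : Fin (n+1) →₀ ℕ) : Prop :=
  mon A ∈ I ∧ ∀ B : Fin (n+1) →₀ ℕ, B ≤ A → B ≠ A → mon B ∉ I

/-- The set of exponent vectors of minimal monomial generators of `I`. -/
def Gens (I : Ideal (PR K n)) : Set (Fin (n+1) →₀ ℕ) := {A | MinGen I A}

/-- The irrelevant maximal ideal `(x_0,…,x_n)`. -/
def irrIdeal (K : Type*) [Field K] (n : ℕ) : Ideal (PR K n) :=
  Ideal.span (Set.range fun i : Fin (n+1) => (X i : PR K n))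

/-- `I` is saturated: `(I : (x_0,…,x_n)) = I`. -/
def Saturated (I : Ideal (PR K n)) : Prop :=
  Submodule.colon I (irrIdeal K n) = I

/-- The saturation `∪ₖ (I : (x_0,…,x_n)^k)`. -/
def saturationOf (I : Ideal (PR K n)) : Ideal (PR K n) :=
  ⨆ k : ℕ, Submodule.colon I (((irrIdeal K n) ^ k : Ideal (PR K n)) : Set (PR K n))

/-- The Hilbert function of `R/I`: `j ↦ dim_K [R/I]_j`. -/
def hilbF {σ : Type*} (I : Ideal (MvPolynomial σ K)) (j : ℕ) : ℕ :=
  Module.finrank K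
    ((homogeneousSubmodule σ K j).map (Ideal.Quotient.mkₐ K I).toLinearMap)

/-- `p` is the Hilbert polynomial of `R/I`. -/
def IsHilbPoly {σ : Type*} (I : Ideal (MvPolynomial σ K)) (p : Polynomial ℚ) : Prop :=
  ∃ N : ℕ, ∀ j : ℕ, N ≤ j → p.eval (j : ℚ) = (hilbF I j : ℚ)

/-- The binomial-coefficient polynomial `C(q, k) = q(q-1)⋯(q-k+1)/k!`. -/
def choosePoly (q : Polynomial ℚ) (k : ℕ) : Polynomial ℚ :=
  ((k.factorial : ℚ))⁻¹ • ∏ j ∈ Finset.range k, (q - Polynomial.C (j : ℚ))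

/-- The canonical representation `p(z) = Σ_{i=0}^d [C(z+i,i+1) − C(z+i−b_i,i+1)]`. -/
def canonicalHP (d : ℕ) (b : ℕ → ℕ) : Polynomial ℚ :=
  ∑ i ∈ Finset.range (d+1),
    (choosePoly (Polynomial.X + Polynomial.C (i : ℚ)) (i+1)
      - choosePoly (Polynomial.X + Polynomial.C (i : ℚ) - Polynomial.C (b i : ℚ)) (i+1))

/-- `x^A >_lex x^B`. -/
def LexGt (A B : Fin (n+1) →₀ ℕ) : Prop :=
  ∃ i : Fin (n+1), (∀ j : Fin (n+1), j < i → A j = B j) ∧ B i < A i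

/-- `I` is a lexsegment ideal. -/
def IsLexsegment (I : Ideal (PR K n)) : Prop :=
  IsMonomialIdeal I ∧ ∀ A B : Fin (n+1) →₀ ℕ, mdeg A = mdeg B → mon B ∈ I →
    LexGt A B → mon A ∈ I

/-- `I` is a homogeneous ideal. -/
def Homog (I : Ideal (PR K n)) : Prop :=
  ∀ f ∈ I, ∀ j : ℕ, homogeneousComponent j f ∈ I

/-- The set of right-shifts of `x^A`. -/
def rightShifts (A : Fin (n+1) →₀ ℕ) : Set (Fin (n+1) →₀ ℕ) :=
  {B | ∃ i : Fin (n+1), (i : ℕ) + 2 ≤ n ∧ A i ≠ 0 ∧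
    B = shiftM A ((((i : ℕ) + 1 : ℕ)) : Fin (n+1)) i}

/-- The set of left-shifts of `x^A`. -/
def leftShifts (A : Fin (n+1) →₀ ℕ) : Set (Fin (n+1) →₀ ℕ) :=
  {B | ∃ i : Fin (n+1), 1 ≤ (i : ℕ) ∧ (i : ℕ) + 1 ≤ n ∧ A i ≠ 0 ∧
    B = shiftM A ((((i : ℕ) - 1 : ℕ)) : Fin (n+1)) i}

/-- The monomials `x^A x_r, …, x^A x_{n-1}` with `r = max(x^A)`. -/
def expSet (A : Fin (n+1) →₀ ℕ) : Set (Fin (n+1) →₀ ℕ) :=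
  {B | ∃ j : Fin (n+1), ((maxIdx A : ℕ)) ≤ (j : ℕ) ∧ (j : ℕ) + 1 ≤ n ∧
    B = A + Finsupp.single j 1}

/-- `x^A ≠ 1` is expandable in `I`. -/
def Expandable (I : Ideal (PR K n)) (A : Fin (n+1) →₀ ℕ) : Prop :=
  A ≠ 0 ∧ MinGen I A ∧ ∀ B ∈ rightShifts A, ¬ MinGen I B

/-- `x^A ≠ 1` is contractible in `I`. -/
def Contractible (I : Ideal (PR K n)) (A : Fin (n+1) →₀ ℕ) : Prop :=
  A ≠ 0 ∧ mon A ∉ I ∧ MinGen I (A + Finsupp.single (((n - 1 : ℕ)) : Fin (n+1)) 1) ∧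
    ∀ B ∈ leftShifts A, mon B ∈ I

/-- The expansion of `x^A` in `I`. -/
def expansionIdeal (I : Ideal (PR K n)) (A : Fin (n+1) →₀ ℕ) : Ideal (PR K n) :=
  Ideal.span ((fun B => (mon B : PR K n)) '' ((Gens I \ {A}) ∪ expSet A))

/-- The contraction of `x^A` in `I`. -/
def contractionIdeal (I : Ideal (PR K n)) (A : Fin (n+1) →₀ ℕ) : Ideal (PR K n) :=
  Ideal.span ((fun B => (mon B : PR K n)) '' ((Gens I ∪ {A}) \ expSet A))

/-- Setting `x_{n-1} = x_n = 1` in the exponent vector `A`. -/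
def stripLastTwo (A : Fin (n+1) →₀ ℕ) : Fin (n+1) →₀ ℕ :=
  Finsupp.update (Finsupp.update A (((n : ℕ)) : Fin (n+1)) 0) (((n - 1 : ℕ)) : Fin (n+1)) 0

/-- The double saturation `sat_{x_{n-1},x_n}(I)` (as an ideal of `R`). -/
def doubleSat (I : Ideal (PR K n)) : Ideal (PR K n) :=
  Ideal.span ((fun A => (mon (stripLastTwo A) : PR K n)) '' Gens I)

/-- Restriction of an exponent vector to the first `n` variables. -/
def restrictExp (A : Fin (n+1) →₀ ℕ) : Fin n →₀ ℕ :=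
  Finsupp.comapDomain Fin.castSucc A (Fin.castSucc_injective n).injOn

/-- The ideal `I · R^{(1)}` in `K[x_0,…,x_{n-1}]` (for saturated monomial `I`). -/
def restrictIdeal (I : Ideal (PR K n)) : Ideal (MvPolynomial (Fin n) K) :=
  Ideal.span ((fun A => (monomial (restrictExp A) (1 : K) : MvPolynomial (Fin n) K)) '' Gens I)

/-- Lex order on exponent vectors in `n` variables. -/
def LexGt' (A B : Fin n →₀ ℕ) : Prop :=
  ∃ i : Fin n, (∀ j : Fin n, j < i → A j = B j) ∧ B i < A i

/-- Monomial ideal in `K[x_0,…,x_{n-1}]`. -/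
def IsMonomialIdeal' (I : Ideal (MvPolynomial (Fin n) K)) : Prop :=
  ∃ S : Set (Fin n →₀ ℕ),
    I = Ideal.span ((fun A => (monomial A (1 : K) : MvPolynomial (Fin n) K)) '' S)

/-- Lexsegment ideal in `K[x_0,…,x_{n-1}]`. -/
def IsLexsegment' (I : Ideal (MvPolynomial (Fin n) K)) : Prop :=
  IsMonomialIdeal' I ∧ ∀ A B : Fin n →₀ ℕ, (∑ i, A i) = (∑ i, B i) →
    monomial B (1 : K) ∈ I → LexGt' A B → monomial A (1 : K) ∈ I

/-- `I` is almost lexsegment: saturated strongly stable with `I·R^{(1)}` lexsegment. -/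
def AlmostLex (I : Ideal (PR K n)) : Prop :=
  IsMonomialIdeal I ∧ StronglyStable I ∧ Saturated I ∧ IsLexsegment' (restrictIdeal I)

/-- A graded free resolution of the ideal `I`, with `rank i` the rank of the `i`-th
free module and `twist i k` the degrees of the standard basis elements. -/
structure GradedFreeRes (I : Ideal (PR K n)) where
  rank : ℕ → ℕ
  twist : (i : ℕ) → Fin (rank i) → ℕ
  diff : (i : ℕ) → ((Fin (rank (i+1)) → PR K n) →ₗ[PR K n] (Fin (rank i) → PR K n))
  aug : (Fin (rank 0) → PR K n) →ₗ[PR K n] PR K n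
  aug_range : LinearMap.range aug = I
  aug_graded : ∀ k, aug (Pi.single k 1) ∈ homogeneousSubmodule (Fin (n+1)) K (twist 0 k)
  diff_graded : ∀ i k l, diff i (Pi.single k 1) l = 0 ∨
    (twist i l ≤ twist (i+1) k ∧
      diff i (Pi.single k 1) l ∈ homogeneousSubmodule (Fin (n+1)) K (twist (i+1) k - twist i l))
  exact_aug : LinearMap.range (diff 0) = LinearMap.ker aug
  exact_diff : ∀ i, LinearMap.range (diff (i+1)) = LinearMap.ker (diff i)

/-- A resolution is minimal if all differential entries lie in the irrelevant ideal. -/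
def MinimalRes {I : Ideal (PR K n)} (F : GradedFreeRes I) : Prop :=
  ∀ i k l, constantCoeff (F.diff i (Pi.single k 1) l) = 0

end

/-! Let `B = x^A x_{i-1} / x_i` be a left-shift with `x^B ∉ I`. Strong stability puts `x^B x_{n-1}` in
`I`. Since `I` is saturated and strongly stable, `x_n` divides none of its minimal generators, so
`B` has no `x_n`; then any proper divisor of `x^B x_{n-1}` in `I` could be shifted, again by strong
stability, to a divisor of `x^B`. Hence `x^B x_{n-1}` is a minimal generator of the same degree with
`B >_lex A`, against the maximality of `A`. -/

open Finsupp

section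

variable {K : Type*} [Field K] {n : ℕ} {I : Ideal (PR K n)}

theorem Finsupp.exists_le_tsub_single_of_lt {ι : Type*} {C E : ι →₀ ℕ} (h : C < E) :
    ∃ k, E k ≠ 0 ∧ C ≤ E - single k 1 := by
  obtain ⟨hle, k, hk⟩ := Finsupp.lt_def.mp h
  refine ⟨k, by omega, fun l => ?_⟩
  rcases eq_or_ne l k with rfl | hl
  · simp only [tsub_apply, single_eq_same]; omega
  · simpa [single_eq_of_ne hl] using hle l

theorem Finsupp.lt_add_single_one {ι : Type*} (C : ι →₀ ℕ) (j : ι) : C < C + single j 1 :=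
  lt_add_of_pos_right C (pos_iff_ne_zero.mpr (single_ne_zero.mpr one_ne_zero))

theorem mdeg_add (A B : Fin (n+1) →₀ ℕ) : mdeg (A + B) = mdeg A + mdeg B := by
  simp [mdeg, Finset.sum_add_distrib]

theorem mdeg_single (j : Fin (n+1)) : mdeg (single j 1) = 1 := by
  simp [mdeg, single_apply]

theorem shiftM_add_single {A : Fin (n+1) →₀ ℕ} {b : Fin (n+1)} (a : Fin (n+1)) (hb : A b ≠ 0) :
    shiftM A a b + single b 1 = A + single a 1 :=
  tsub_add_cancel_of_le (single_le_iff.mpr (by simp; omega))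

theorem shiftM_add {A : Fin (n+1) →₀ ℕ} {b : Fin (n+1)} (a : Fin (n+1)) (hb : A b ≠ 0)
    (E : Fin (n+1) →₀ ℕ) : shiftM A a b + E = shiftM (A + E) a b := by
  rw [shiftM, tsub_add_eq_add_tsub (single_le_iff.mpr (by simp; omega)), shiftM, add_right_comm]

theorem mdeg_shiftM {A : Fin (n+1) →₀ ℕ} {b : Fin (n+1)} (a : Fin (n+1)) (hb : A b ≠ 0) :
    mdeg (shiftM A a b) = mdeg A := by
  have := congrArg mdeg (shiftM_add_single a hb)
  simp only [mdeg_add, mdeg_single] at this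
  omega

theorem LexGt.ne {A B : Fin (n+1) →₀ ℕ} (h : LexGt A B) : A ≠ B := by
  rintro rfl
  obtain ⟨_, _, h⟩ := h
  exact lt_irrefl _ h

theorem LexGt.asymm {A B : Fin (n+1) →₀ ℕ} (h : LexGt A B) : ¬ LexGt B A := by
  obtain ⟨p, hp, hpl⟩ := h
  rintro ⟨q, hq, hql⟩
  rcases lt_trichotomy p q with h | rfl | h
  · exact absurd (hq p h).symm (by omega)
  · omega
  · exact absurd (hp q h).symm (by omega)

theorem lexGt_shiftM (A : Fin (n+1) →₀ ℕ) {a b : Fin (n+1)} (hab : a < b) :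
    LexGt (shiftM A a b) A := by
  refine ⟨a, fun j hj => ?_, ?_⟩
  · simp [shiftM, hj.ne, (hj.trans hab).ne]
  · simp [shiftM, hab.ne]

theorem mon_mem_of_le {C D : Fin (n+1) →₀ ℕ} (hC : mon C ∈ I) (hCD : C ≤ D) : mon D ∈ I := by
  rw [← tsub_add_cancel_of_le hCD, mon, ← mul_one (1 : K), ← monomial_mul]
  exact I.mul_mem_left _ hC

theorem MinGen.mon_notMem_of_lt {C D : Fin (n+1) →₀ ℕ} (hD : MinGen I D) (hCD : C < D) :
    mon C ∉ I :=
  hD.2 C hCD.le hCD.ne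

theorem StronglyStable.mon_add_single_mem (hss : StronglyStable I) {C : Fin (n+1) →₀ ℕ}
    {a b : Fin (n+1)} (hC : mon (C + single b 1) ∈ I) (hab : a < b) :
    mon (C + single a 1) ∈ I := by
  have h := hss _ hC a b (by simp) hab
  rwa [shiftM, add_right_comm, add_tsub_cancel_right] at h

theorem Saturated.mon_mem_of_add_single_last (hss : StronglyStable I) (hsat : Saturated I)
    {C : Fin (n+1) →₀ ℕ} (hC : mon (C + single (Fin.last n) 1) ∈ I) : mon C ∈ I := by
  rw [← hsat, irrIdeal, Ideal.colon_span, Submodule.mem_colon, Set.forall_mem_range]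
  intro j
  have hCj : mon (C + single j 1) ∈ I := by
    rcases (Fin.le_last j).lt_or_eq with hj | rfl
    · exact hss.mon_add_single_mem hC hj
    · exact hC
  rwa [smul_eq_mul, mon, ← pow_one (X j), ← monomial_add_single]

theorem MinGen.apply_last_eq_zero (hss : StronglyStable I) (hsat : Saturated I)
    {D : Fin (n+1) →₀ ℕ} (hD : MinGen I D) : D (Fin.last n) = 0 := by
  by_contra hne
  obtain ⟨C, rfl⟩ : ∃ C, D = C + single (Fin.last n) 1 :=
    ⟨_, (tsub_add_cancel_of_le (single_le_iff.mpr (Nat.one_le_iff_ne_zero.mpr hne))).symm⟩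
  exact hD.mon_notMem_of_lt (lt_add_single_one C _) (hsat.mon_mem_of_add_single_last hss hD.1)

theorem StronglyStable.minGen_add_single (hss : StronglyStable I) {B : Fin (n+1) →₀ ℕ}
    {j : Fin (n+1)} (hB : mon B ∉ I) (hBj : mon (B + single j 1) ∈ I)
    (htop : ∀ k, j < k → B k = 0) : MinGen I (B + single j 1) := by
  refine ⟨hBj, fun C hC hne hCI => hB ?_⟩
  obtain ⟨k, hk, hCk⟩ := exists_le_tsub_single_of_lt (lt_of_le_of_ne hC hne)
  have hD := mon_mem_of_le hCI hCk
  rcases lt_trichotomy k j with hkj | rfl | hjk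
  · have hBk : single k 1 ≤ B := single_le_iff.mpr <|
      Nat.one_le_iff_ne_zero.mpr (by simpa [hkj.ne'] using hk)
    have h := hss.mon_add_single_mem (C := B - single k 1) (a := k) (b := j)
      (by rwa [tsub_add_eq_add_tsub hBk]) hkj
    rwa [tsub_add_cancel_of_le hBk] at h
  · rwa [add_tsub_cancel_right] at hD
  · simp [htop k hjk, hjk.ne] at hk

end

theorem lex_largest_contractible_general
    {K : Type*} [Field K] {n : ℕ} (I : Ideal (PR K n))
    (hss : StronglyStable I) (hsat : Saturated I)
    (A : Fin (n+1) →₀ ℕ) (hA0 : A ≠ 0)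
    (hA : MinGen I (A + Finsupp.single (((n - 1 : ℕ)) : Fin (n+1)) 1))
    (hmax : ∀ B : Fin (n+1) →₀ ℕ, mdeg B = mdeg A →
      MinGen I (B + Finsupp.single (((n - 1 : ℕ)) : Fin (n+1)) 1) → B ≠ A → LexGt A B) :
    Contractible I A := by
  have hAlast : A (Fin.last n) = 0 := by
    have := hA.apply_last_eq_zero hss hsat
    simp only [Finsupp.add_apply] at this
    omega
  refine ⟨hA0, hA.mon_notMem_of_lt (lt_add_single_one A _), hA, ?_⟩
  rintro _ ⟨i, hi1, hin, hAi, rfl⟩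
  by_contra hB
  set a : Fin (n+1) := (((i : ℕ) - 1 : ℕ) : Fin (n+1))
  have hai : a < i := by
    rw [Fin.lt_def, Fin.val_cast_of_lt (by omega)]
    omega
  have hlex := lexGt_shiftM A hai
  refine hlex.asymm (hmax _ (mdeg_shiftM a hAi) ?_ hlex.ne)
  refine hss.minGen_add_single hB ?_ fun k hk => ?_
  · rw [shiftM_add a hAi]
    exact hss _ hA.1 a i (by simp only [Finsupp.add_apply]; omega) hai
  · obtain rfl : k = Fin.last n := by
      rw [Fin.lt_def, Fin.val_cast_of_lt (by omega)] at hk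
      exact Fin.ext (by have := k.isLt; rw [Fin.val_last]; omega)
    have hle : shiftM A a i ≤ A + single a 1 := tsub_le_self
    simpa [hAlast, single_apply, (hai.trans_le (Fin.le_last i)).ne] using hle (Fin.last n)

/-- if a saturated strongly stable ideal is not doubly saturated, then in
each degree the lexicographically largest monomial `x^A` with `x^A x_{n-1} ∈ G(I)`
is contractible. -/
theorem lex_largest_contractible
    {K : Type*} [Field K] {n : ℕ} (hn : 2 ≤ n) (I : Ideal (PR K n))
    (hmono : IsMonomialIdeal I) (hss : StronglyStable I) (hsat : Saturated I)
    (hnds : doubleSat I ≠ I)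
    (A : Fin (n+1) →₀ ℕ) (hA0 : A ≠ 0)
    (hA : MinGen I (A + Finsupp.single (((n - 1 : ℕ)) : Fin (n+1)) 1))
    (hmax : ∀ B : Fin (n+1) →₀ ℕ, mdeg B = mdeg A →
      MinGen I (B + Finsupp.single (((n - 1 : ℕ)) : Fin (n+1)) 1) → B ≠ A → LexGt A B) :
    Contractible I A :=
  lex_largest_contractible_general I hss hsat A hA0 hA hmax
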